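/- arXiv:2605.24640 — 2 statements merged into one kernel-verified Lean document; each statement's English description precedes it below -/
import Mathlib

section
/- With R = ∏ R_i a product of finite commutative local rings, F the indices of field factors, V_k (k ∈ F) as above, and V_0 = Z(R)* \ ⋃_{k∈F} V_k: any two distinct vertices of V_0 are adjacent in WΓ(R), i.e., V_0 induces a clique. -/
attribute [local instance] Classical.propDecidable

lemma socle_exists (S : Type*) [CommRing S] [Finite S] [IsLocalRing S] (h : ¬ IsField S) :
    ∃ t : S, t ≠ 0 ∧ ¬ IsUnit t ∧ ∀ a : S, ¬ IsUnit a → t * a = 0 := by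
  obtain ⟨m, hm⟩ := IsArtinianRing.isNilpotent_jacobson_bot (R := S)
  rw [IsLocalRing.jacobson_eq_maximalIdeal ⊥ bot_ne_top] at hm
  set M := IsLocalRing.maximalIdeal S with hM
  have hMbot : M ≠ ⊥ := by
    rw [Ne, ← IsLocalRing.isField_iff_maximalIdeal_eq]; exact h
  have hex : ∃ k, M ^ k = ⊥ := ⟨m, by rw [hm]; rfl⟩
  set k := Nat.find hex with hk
  have hspec : M ^ k = ⊥ := Nat.find_spec hex
  have hk2 : 2 ≤ k := by
    by_contra hlt
    push_neg at hlt
    interval_cases k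
    · simp [Ideal.one_eq_top] at hspec
    · exact hMbot (by simpa using hspec)
  have hkm1 : k - 1 < k := by omega
  have hne : M ^ (k - 1) ≠ ⊥ := Nat.find_min hex hkm1
  obtain ⟨t, htM, ht0⟩ := (Submodule.ne_bot_iff _).mp hne
  refine ⟨t, ht0, ?_, ?_⟩
  · have : t ∈ M := by
      have hle : M ^ (k - 1) ≤ M ^ 1 := Ideal.pow_le_pow_right (by omega)
      simpa using hle htM
    exact (IsLocalRing.mem_maximalIdeal t).mp this
  · intro a ha
    have haM : a ∈ M := (IsLocalRing.mem_maximalIdeal a).mpr ha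
    have : t * a ∈ M ^ (k - 1) * M := Ideal.mul_mem_mul htM haM
    rw [← pow_succ, Nat.sub_add_cancel (by omega), hspec] at this
    simpa using this

lemma single_mul_vanish {n : ℕ} {R : Fin n → Type*} [∀ i, CommRing (R i)]
    (i : Fin n) (t : R i) (x : ∀ i, R i) (h : t * x i = 0) :
    Pi.single i t * x = 0 := by
  funext k
  by_cases hk : k = i
  · subst hk; simpa [Pi.single_eq_same] using h
  · simp [Pi.single_eq_of_ne hk]

lemma single_ne_zero' {n : ℕ} {R : Fin n → Type*} [∀ i, CommRing (R i)]
    (i : Fin n) (t : R i) (ht : t ≠ 0) : (Pi.single i t : ∀ i, R i) ≠ 0 := by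
  intro h
  exact ht (by simpa [Pi.single_eq_same] using congrFun h i)

lemma single_mul_single_ne {n : ℕ} {R : Fin n → Type*} [∀ i, CommRing (R i)]
    {i j : Fin n} (hij : i ≠ j) (t : R i) (u : R j) :
    (Pi.single i t : ∀ i, R i) * Pi.single j u = 0 := by
  funext k
  by_cases hk : k = i
  · subst hk; simp [Pi.single_eq_of_ne hij]
  · simp [Pi.single_eq_of_ne hk]

lemma split_cases {n : ℕ} {R : Fin n → Type*} [∀ i, CommRing (R i)]
    [∀ i, IsLocalRing (R i)]
    (x : ∀ i, R i) (hxz : ∃ z : ∀ i, R i, z ≠ 0 ∧ x * z = 0)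
    (hx : ¬ ∃ k, IsField (R k) ∧ x k = 0 ∧ ∀ i ≠ k, IsUnit (x i)) :
    (∃ i, ¬ IsField (R i) ∧ ¬ IsUnit (x i)) ∨
      (∃ i j, i ≠ j ∧ x i = 0 ∧ x j = 0) := by
  by_contra hc
  push_neg at hc
  obtain ⟨hA, hB⟩ := hc
  -- some coordinate of x is a nonunit
  obtain ⟨z, hz0, hxz0⟩ := hxz
  obtain ⟨i, hzi⟩ : ∃ i, z i ≠ 0 := by
    by_contra hz; push_neg at hz; exact hz0 (funext hz)
  have hxi : ¬ IsUnit (x i) := by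
    intro hu
    have : x i * z i = 0 := by simpa using congrFun hxz0 i
    exact hzi ((hu.mul_right_eq_zero).mp this)
  have hfi : IsField (R i) := by
    by_contra hf
    exact hxi (hA i hf)
  have hxi0 : x i = 0 := by
    by_contra h0
    letI := hfi.toField
    exact hxi (isUnit_iff_ne_zero.mpr h0)
  refine hx ⟨i, hfi, hxi0, ?_⟩
  intro j hji
  by_contra hxj
  have hfj : IsField (R j) := by
    by_contra hf
    exact hxj (hA j hf)
  have hxj0 : x j = 0 := by
    by_contra h0
    letI := hfj.toField
    exact hxj (isUnit_iff_ne_zero.mpr h0)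
  exact hB i j (fun h => hji h.symm) hxi0 hxj0

lemma pick_ne {n : ℕ} {R : Fin n → Type*} [∀ i, CommRing (R i)]
    {y : ∀ i, R i} {j₁ j₂ : Fin n} (hj : j₁ ≠ j₂) (h1 : y j₁ = 0) (h2 : y j₂ = 0)
    (i : Fin n) : ∃ j, j ≠ i ∧ y j = 0 := by
  by_cases h : j₁ = i
  · exact ⟨j₂, fun e => hj (h.trans e.symm), h2⟩
  · exact ⟨j₁, h, h1⟩

/-- The weakly zero-divisor graph of a commutative ring `R`: vertices are the
nonzero zero-divisors, with distinct `x, y` adjacent iff there exist nonzero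
`r ∈ Ann(x)` and `s ∈ Ann(y)` with `r * s = 0`. -/
def wGamma (R : Type*) [CommRing R] :
    SimpleGraph {x : R // x ≠ 0 ∧ ∃ y : R, y ≠ 0 ∧ x * y = 0} where
  Adj a b := a ≠ b ∧
    ∃ r s : R, r ≠ 0 ∧ s ≠ 0 ∧ r * (a : R) = 0 ∧ s * (b : R) = 0 ∧ r * s = 0
  symm := ⟨by
    rintro a b ⟨hab, r, s, hr, hs, hra, hsb, hrs⟩
    exact ⟨hab.symm, s, r, hs, hr, hsb, hra, by rwa [mul_comm]⟩⟩
  loopless := ⟨by rintro a ⟨hab, -⟩; exact hab rfl⟩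

/-- With `R = ∏ R_i` a product of finite commutative local rings and
`V_0 = Z(R)* \ ⋃_{k ∈ F} V_k`, any two distinct vertices of `V_0` are adjacent
in the weakly zero-divisor graph: `V_0` induces a clique. -/
theorem stmt_6 (n : ℕ) (R : Fin n → Type*) [∀ i, CommRing (R i)]
    [∀ i, Finite (R i)] [∀ i, IsLocalRing (R i)]
    (x y : {x : ∀ i, R i // x ≠ 0 ∧ ∃ y : ∀ i, R i, y ≠ 0 ∧ x * y = 0})
    (hx : ¬ ∃ k, IsField (R k) ∧ (x : ∀ i, R i) k = 0 ∧
      ∀ i ≠ k, IsUnit ((x : ∀ i, R i) i))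
    (hy : ¬ ∃ k, IsField (R k) ∧ (y : ∀ i, R i) k = 0 ∧
      ∀ i ≠ k, IsUnit ((y : ∀ i, R i) i))
    (hxy : x ≠ y) :
    (wGamma (∀ i, R i)).Adj x y := by
  refine ⟨hxy, ?_⟩
  have cx := split_cases (x : ∀ i, R i) x.2.2 hx
  have cy := split_cases (y : ∀ i, R i) y.2.2 hy
  rcases cx with ⟨i, hfi, hui⟩ | ⟨i₁, i₂, hi, hx1, hx2⟩
  · obtain ⟨t, ht0, htnu, htan⟩ := socle_exists (R i) hfi
    rcases cy with ⟨j, hfj, huj⟩ | ⟨j₁, j₂, hj, hy1, hy2⟩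
    · obtain ⟨u, hu0, hunu, huan⟩ := socle_exists (R j) hfj
      refine ⟨Pi.single i t, Pi.single j u, single_ne_zero' _ _ ht0,
        single_ne_zero' _ _ hu0, single_mul_vanish _ _ _ (htan _ hui),
        single_mul_vanish _ _ _ (huan _ huj), ?_⟩
      by_cases hij : i = j
      · subst hij
        have htu : t * u = 0 := htan u hunu
        funext k
        by_cases hk : k = i
        · subst hk; simpa [Pi.single_eq_same] using htu
        · simp [Pi.single_eq_of_ne hk]
      · exact single_mul_single_ne hij t u
    · obtain ⟨j, hji, hyj⟩ := pick_ne hj hy1 hy2 i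
      refine ⟨Pi.single i t, Pi.single j 1, single_ne_zero' _ _ ht0,
        single_ne_zero' _ _ one_ne_zero, single_mul_vanish _ _ _ (htan _ hui),
        single_mul_vanish _ _ _ (by rw [hyj, mul_zero]), ?_⟩
      exact single_mul_single_ne (fun e => hji e.symm) t 1
  · rcases cy with ⟨j, hfj, huj⟩ | ⟨j₁, j₂, hj, hy1, hy2⟩
    · obtain ⟨u, hu0, hunu, huan⟩ := socle_exists (R j) hfj
      obtain ⟨i, hij, hxi⟩ := pick_ne hi hx1 hx2 j
      refine ⟨Pi.single i 1, Pi.single j u, single_ne_zero' _ _ one_ne_zero,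
        single_ne_zero' _ _ hu0, single_mul_vanish _ _ _ (by rw [hxi, mul_zero]),
        single_mul_vanish _ _ _ (huan _ huj), ?_⟩
      exact single_mul_single_ne hij 1 u
    · obtain ⟨j, hji, hyj⟩ := pick_ne hj hy1 hy2 i₁
      refine ⟨Pi.single i₁ 1, Pi.single j 1, single_ne_zero' _ _ one_ne_zero,
        single_ne_zero' _ _ one_ne_zero,
        single_mul_vanish _ _ _ (by rw [hx1, mul_zero]),
        single_mul_vanish _ _ _ (by rw [hyj, mul_zero]), ?_⟩
      exact single_mul_single_ne (fun e => hji e.symm) 1 1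
end

section
/- For every finite commutative ring R, all eigenvalues of the Laplacian matrix of the weakly zero-divisor graph WΓ(R) are integers (WΓ(R) is Laplacian integral). -/
attribute [local instance] Classical.propDecidable

/-- Non-adjacency in the weakly zero-divisor graph is transitive, i.e. the
graph is complete multipartite. -/
lemma wGamma_nonadj_trans {R : Type*} [CommRing R]
    {x y z : {x : R // x ≠ 0 ∧ ∃ y : R, y ≠ 0 ∧ x * y = 0}}
    (hxy : ¬ (wGamma R).Adj x y) (hyz : ¬ (wGamma R).Adj y z) :
    ¬ (wGamma R).Adj x z := by
  intro hxz
  obtain ⟨hne, r, s, hr, hs, hrx, hsz, hrs⟩ := hxz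
  by_cases h1 : x = y
  · subst h1
    exact hyz ⟨hne, r, s, hr, hs, hrx, hsz, hrs⟩
  by_cases h2 : y = z
  · subst h2
    exact hxy ⟨hne, r, s, hr, hs, hrx, hsz, hrs⟩
  obtain ⟨u, hu, huy0⟩ := y.2.2
  have huy : u * (y : R) = 0 := by rw [mul_comm]; exact huy0
  have hru : r * u ≠ 0 := fun h => hxy ⟨h1, r, u, hr, hu, hrx, huy, h⟩
  have hus : u * s ≠ 0 := fun h => hyz ⟨h2, u, s, hu, hs, huy, hsz, h⟩
  refine hxy ⟨h1, r * u, u * s, hru, hus, ?_, ?_, ?_⟩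
  · rw [mul_comm r u, mul_assoc, hrx, mul_zero]
  · rw [mul_comm u s, mul_assoc, huy, mul_zero]
  · have h : r * u * (u * s) = r * s * (u * u) := by ring
    rw [h, hrs, zero_mul]

/-- For every finite commutative ring `R`, all eigenvalues of the Laplacian
matrix of the weakly zero-divisor graph `WΓ(R)` are integers. -/
theorem stmt_12 (R : Type*) [CommRing R] [Fintype R] :
    ∀ μ ∈ ((wGamma R).lapMatrix ℝ).charpoly.roots, ∃ m : ℤ, μ = (m : ℝ) := by
  classical
  set V := {x : R // x ≠ 0 ∧ ∃ y : R, y ≠ 0 ∧ x * y = 0} with hV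
  set G := wGamma R with hG
  intro μ hμ
  -- from a root of the characteristic polynomial to an eigenvector
  have hroot : (G.lapMatrix ℝ).charpoly.IsRoot μ :=
    (Polynomial.isRoot_of_mem_roots hμ)
  have hdet : (Matrix.diagonal (fun _ : V => μ) - G.lapMatrix ℝ).det = 0 := by
    have h1 : ((Matrix.charmatrix (G.lapMatrix ℝ)).map (Polynomial.evalRingHom μ))
        = Matrix.diagonal (fun _ : V => μ) - G.lapMatrix ℝ := by
      ext i j
      by_cases h : i = j
      · subst h
        simp [Matrix.charmatrix_apply_eq, Matrix.diagonal_apply_eq]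
      · simp [Matrix.charmatrix_apply_ne _ _ _ h, Matrix.diagonal_apply_ne _ h]
    have h2 := (Polynomial.evalRingHom μ).map_det (Matrix.charmatrix (G.lapMatrix ℝ))
    rw [RingHom.mapMatrix_apply, h1] at h2
    rw [← h2]
    exact hroot
  obtain ⟨v, hv, hvec⟩ := Matrix.exists_mulVec_eq_zero_iff.mpr hdet
  have heig : ∀ x : V, (G.lapMatrix ℝ).mulVec v x = μ * v x := by
    intro x
    have := congrFun hvec x
    simp only [Matrix.sub_mulVec, Pi.sub_apply, Matrix.mulVec_diagonal, Pi.zero_apply] at this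
    linarith [this]
  -- set up the multipartite structure
  set cls : V → Finset V := fun x => Finset.univ.filter (fun y => ¬ G.Adj x y) with hcls
  have hmem_cls : ∀ x y : V, y ∈ cls x ↔ ¬ G.Adj x y := by
    intro x y; simp [hcls]
  have hself : ∀ x : V, x ∈ cls x := fun x => (hmem_cls x x).mpr (G.loopless.irrefl x)
  have hcls_eq : ∀ x y : V, y ∈ cls x → cls y = cls x := by
    intro x y hy
    rw [hmem_cls] at hy
    ext z
    rw [hmem_cls, hmem_cls]
    constructor
    · intro hz; exact wGamma_nonadj_trans hy hz
    · intro hz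
      exact wGamma_nonadj_trans (fun h => hy (h.symm)) hz
  set n : ℕ := Fintype.card V with hn
  set S : ℝ := ∑ y : V, v y with hS
  set T : V → ℝ := fun x => ∑ y ∈ cls x, v y with hT
  -- degrees
  have hdeg : ∀ x : V, G.degree x = n - (cls x).card := by
    intro x
    rw [← SimpleGraph.card_neighborFinset_eq_degree]
    have : G.neighborFinset x = (cls x)ᶜ := by
      ext y
      simp [SimpleGraph.mem_neighborFinset, hmem_cls, Finset.mem_compl]
    rw [this, Finset.card_compl]
  -- the key equation
  have hkey : ∀ x : V, ((n : ℝ) - (cls x).card - μ) * v x = S - T x := by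
    intro x
    have h1 := heig x
    rw [G.lapMatrix_mulVec_apply] at h1
    have h2 : G.neighborFinset x = (cls x)ᶜ := by
      ext y
      simp [SimpleGraph.mem_neighborFinset, hmem_cls, Finset.mem_compl]
    have h3 : ∑ u ∈ G.neighborFinset x, v u = S - T x := by
      rw [h2, hS, hT]
      have := Finset.sum_add_sum_compl (cls x) v
      linarith [this]
    have h4 : (G.degree x : ℝ) = (n : ℝ) - (cls x).card := by
      rw [hdeg x]
      have hle : (cls x).card ≤ n := Finset.card_le_univ _
      push_cast [Nat.cast_sub hle]
      ring
    rw [h3, h4] at h1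
    linarith [h1]
  -- case analysis
  by_cases hcase : ∃ x : V, μ = (n : ℝ) - (cls x).card
  · obtain ⟨x, hx⟩ := hcase
    exact ⟨(n : ℤ) - (cls x).card, by push_cast [hx]; ring⟩
  · push_neg at hcase
    -- v is constant on classes
    have hconst : ∀ x : V, ∀ y ∈ cls x, v y = v x := by
      intro x y hy
      have hxne : ((n : ℝ) - (cls x).card - μ) ≠ 0 := by
        intro h
        exact hcase x (by linarith)
      have hcy : cls y = cls x := hcls_eq x y hy
      have e1 := hkey x
      have e2 := hkey y
      rw [hcy] at e2
      have hTy : T y = T x := by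
        show (∑ z ∈ cls y, v z) = ∑ z ∈ cls x, v z
        rw [hcy]
      rw [hTy] at e2
      have : ((n : ℝ) - (cls x).card - μ) * v y = ((n : ℝ) - (cls x).card - μ) * v x := by
        rw [e1, e2]
      exact mul_left_cancel₀ hxne this
    have hTx : ∀ x : V, T x = (cls x).card * v x := by
      intro x
      rw [hT]
      simp only
      rw [Finset.sum_congr rfl (fun y hy => hconst x y hy), Finset.sum_const, nsmul_eq_mul]
    have hkey2 : ∀ x : V, ((n : ℝ) - μ) * v x = S := by
      intro x
      have := hkey x
      rw [hTx x] at this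
      linarith [this]
    by_cases hμn : μ = (n : ℝ)
    · exact ⟨n, by rw [hμn]; push_cast; ring⟩
    · -- v is globally constant, hence μ = 0
      obtain ⟨x0, hx0⟩ : ∃ x : V, v x ≠ 0 := by
        by_contra h
        push_neg at h
        exact hv (funext h)
      have hvconst : ∀ x : V, v x = v x0 := by
        intro x
        have h1 := hkey2 x
        have h2 := hkey2 x0
        have hne : (n : ℝ) - μ ≠ 0 := fun h => hμn (by linarith)
        have : ((n : ℝ) - μ) * v x = ((n : ℝ) - μ) * v x0 := by rw [h1, h2]
        exact mul_left_cancel₀ hne this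
      have hSn : S = (n : ℝ) * v x0 := by
        rw [hS]
        rw [Finset.sum_congr rfl (fun x _ => hvconst x), Finset.sum_const, nsmul_eq_mul]
        simp [hn]
      have := hkey2 x0
      rw [hSn] at this
      have hμ0 : μ * v x0 = 0 := by ring_nf; ring_nf at this; linarith
      have : μ = 0 := by
        rcases mul_eq_zero.mp hμ0 with h | h
        · exact h
        · exact absurd h hx0
      exact ⟨0, by simp [this]⟩
end
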